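/- arXiv:2604.17069 — 8 statements merged into one kernel-verified Lean document; each statement's English description precedes it below -/
import Mathlib

section
/- If A and B are matrices in SL(2,ℤ) whose commutator has trace −2, i.e. tr(ABA⁻¹B⁻¹) = −2, then tr(A)² + tr(B)² + tr(AB)² = tr(A)·tr(B)·tr(AB). -/
/-!
For a `2 × 2` matrix, Cayley–Hamilton gives `adj M = tr M • 1 - M`, so traces of words in
`M, N, adj M, adj N` reduce to polynomials in `tr M, tr N, tr (M N), det M, det N`. Applied to the
commutator in `SL(2, R)` this is Fricke's identity
`tr [A, B] = tr A² + tr B² + tr (AB)² - tr A tr B tr (AB) - 2`,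
so `tr [A, B] = -2` is exactly the Markov-type equation.
-/

open scoped MatrixGroups

namespace Matrix

variable {R : Type*} [CommRing R]

theorem adjugate_fin_two_eq_trace_smul_one_sub (M : Matrix (Fin 2) (Fin 2) R) :
    adjugate M = trace M • 1 - M := by
  ext i j
  fin_cases i <;> fin_cases j <;> simp [adjugate_fin_two, trace_fin_two]

theorem mul_self_fin_two_eq (M : Matrix (Fin 2) (Fin 2) R) :
    M * M = trace M • M - det M • 1 := by
  have h := mul_adjugate M
  rw [adjugate_fin_two_eq_trace_smul_one_sub, Matrix.mul_sub, Matrix.mul_smul, Matrix.mul_one] at h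
  rw [← h]
  abel

theorem trace_mul_adjugate_fin_two (X M : Matrix (Fin 2) (Fin 2) R) :
    trace (X * adjugate M) = trace X * trace M - trace (X * M) := by
  rw [adjugate_fin_two_eq_trace_smul_one_sub, Matrix.mul_sub, Matrix.mul_smul, Matrix.mul_one,
    trace_sub, trace_smul, smul_eq_mul, mul_comm]

theorem trace_mul_mul_self_fin_two (X M : Matrix (Fin 2) (Fin 2) R) :
    trace (X * M * M) = trace M * trace (X * M) - det M * trace X := by
  rw [Matrix.mul_assoc, mul_self_fin_two_eq, Matrix.mul_sub, Matrix.mul_smul, Matrix.mul_smul,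
    Matrix.mul_one, trace_sub, trace_smul, trace_smul, smul_eq_mul, smul_eq_mul]

theorem trace_mul_self_fin_two (M : Matrix (Fin 2) (Fin 2) R) :
    trace (M * M) = trace M ^ 2 - 2 * det M := by
  have h := trace_mul_mul_self_fin_two 1 M
  rw [Matrix.one_mul, trace_one, Fintype.card_fin] at h
  rw [h]
  push_cast
  ring

theorem trace_mul_mul_adjugate_mul_adjugate_fin_two (M N : Matrix (Fin 2) (Fin 2) R) :
    trace (M * N * adjugate M * adjugate N) =
      det N * trace M ^ 2 + det M * trace N ^ 2 + trace (M * N) ^ 2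
        - trace M * trace N * trace (M * N) - 2 * det M * det N := by
  have h_conj : trace (M * N * adjugate M) = det M * trace N := by
    rw [trace_mul_cycle, adjugate_mul, Matrix.smul_mul, Matrix.one_mul, trace_smul, smul_eq_mul]
  have h_cycle : trace (M * N * adjugate M * N) = trace (N * M * N * adjugate M) := by
    rw [trace_mul_comm]
    simp only [Matrix.mul_assoc]
  have h_NMN : trace (N * M * N) = trace N * trace (M * N) - det N * trace M := by
    rw [Matrix.mul_assoc, trace_mul_comm, trace_mul_mul_self_fin_two]
  have h_NMNM : trace (N * M * N * M) = trace (M * N) ^ 2 - 2 * (det M * det N) := by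
    rw [Matrix.mul_assoc (N * M), trace_mul_self_fin_two, trace_mul_comm, det_mul, mul_comm (det N)]
  rw [trace_mul_adjugate_fin_two, h_conj, h_cycle, trace_mul_adjugate_fin_two, h_NMN, h_NMNM]
  ring

end Matrix

theorem Matrix.SpecialLinearGroup.trace_commutator_fin_two {R : Type*} [CommRing R]
    (A B : SL(2, R)) :
    Matrix.trace ((A * B * A⁻¹ * B⁻¹ : SL(2, R)) : Matrix (Fin 2) (Fin 2) R) =
      Matrix.trace (A : Matrix (Fin 2) (Fin 2) R) ^ 2
        + Matrix.trace (B : Matrix (Fin 2) (Fin 2) R) ^ 2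
        + Matrix.trace ((A * B : SL(2, R)) : Matrix (Fin 2) (Fin 2) R) ^ 2
        - Matrix.trace (A : Matrix (Fin 2) (Fin 2) R) * Matrix.trace (B : Matrix (Fin 2) (Fin 2) R)
          * Matrix.trace ((A * B : SL(2, R)) : Matrix (Fin 2) (Fin 2) R) - 2 := by
  simp only [coe_mul, coe_inv, Matrix.trace_mul_mul_adjugate_mul_adjugate_fin_two, det_coe]
  ring

/-- If `A, B ∈ SL(2, ℤ)` have commutator of trace `−2`, then
`tr(A)² + tr(B)² + tr(AB)² = tr(A)·tr(B)·tr(AB)`. -/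
theorem markov_equation_from_commutator_trace
    (A B : Matrix.SpecialLinearGroup (Fin 2) ℤ)
    (h : Matrix.trace ((A * B * A⁻¹ * B⁻¹ : Matrix.SpecialLinearGroup (Fin 2) ℤ) :
        Matrix (Fin 2) (Fin 2) ℤ) = -2) :
    (Matrix.trace (A : Matrix (Fin 2) (Fin 2) ℤ)) ^ 2
      + (Matrix.trace (B : Matrix (Fin 2) (Fin 2) ℤ)) ^ 2
      + (Matrix.trace ((A * B : Matrix.SpecialLinearGroup (Fin 2) ℤ) :
          Matrix (Fin 2) (Fin 2) ℤ)) ^ 2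
    = Matrix.trace (A : Matrix (Fin 2) (Fin 2) ℤ)
        * Matrix.trace (B : Matrix (Fin 2) (Fin 2) ℤ)
        * Matrix.trace ((A * B : Matrix.SpecialLinearGroup (Fin 2) ℤ) :
            Matrix (Fin 2) (Fin 2) ℤ) := by
  rw [Matrix.SpecialLinearGroup.trace_commutator_fin_two] at h
  linear_combination h
end

section
/- Let p, q be natural numbers with 1 ≤ q, p ≤ q and gcd(p, q) = 1. Let A = !![1,1;1,2] and B = !![3,2;4,3] be 2×2 integer matrices, and for i = 1, …, q let Xᵢ = B if ⌊p·i/q⌋ − ⌊p·(i−1)/q⌋ = 1 and Xᵢ = A otherwise (the lower Christoffel word of slope p/q). Then the product C = X₁·X₂·⋯·X_q satisfies tr(C) = 3 · C₀₁, i.e. the trace of C equals three times the upper-right entry of C. -/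
/-!
Consecutive fractions `p₁/q₁ < p₂/q₂` of the Stern–Brocot tree (Farey neighbours,
`p₂ q₁ - p₁ q₂ = 1`) have Christoffel words that concatenate to the Christoffel word of the
mediant `(p₁ + p₂)/(q₁ + q₂)`. Hence the whole tree is generated from `A` and `B` by the moves
`(X, Y) ↦ (X, XY)` and `(X, Y) ↦ (XY, Y)`. The condition `tr M = 3 M₀₁` cuts out a linear
subspace, and Cayley–Hamilton writes `X(XY)` and `(XY)Y` as linear combinations of `X, Y, XY`,
so the moves preserve the property "`X`, `Y` and `XY` all satisfy it". Finally, every reduced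
fraction in `[0, 1]` is an endpoint of a Farey pair, by Bézout.
-/

open Matrix

section Cohn

variable {R : Type*} [CommRing R]

theorem Matrix.mul_self_fin_two (M : Matrix (Fin 2) (Fin 2) R) :
    M * M = M.trace • M - M.det • (1 : Matrix (Fin 2) (Fin 2) R) := by
  ext i j
  fin_cases i <;> fin_cases j <;>
    simp [mul_apply, trace_fin_two, det_fin_two] <;> ring

def IsCohn (M : Matrix (Fin 2) (Fin 2) R) : Prop := M.trace = 3 * M 0 1

variable {X Y : Matrix (Fin 2) (Fin 2) R}

theorem IsCohn.smul_sub_smul (hX : IsCohn X) (hY : IsCohn Y) (a b : R) :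
    IsCohn (a • X - b • Y) := by
  simp only [IsCohn, trace_sub, trace_smul, Matrix.sub_apply, Matrix.smul_apply, smul_eq_mul] at *
  rw [hX, hY]
  ring

theorem IsCohn.mul_mul_self (hX : IsCohn X) (hXY : IsCohn (X * Y)) : IsCohn (X * Y * Y) := by
  rw [Matrix.mul_assoc, Y.mul_self_fin_two, Matrix.mul_sub, Matrix.mul_smul, Matrix.mul_smul,
    Matrix.mul_one]
  exact hXY.smul_sub_smul hX _ _

theorem IsCohn.mul_self_mul (hY : IsCohn Y) (hXY : IsCohn (X * Y)) : IsCohn (X * (X * Y)) := by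
  rw [← Matrix.mul_assoc, X.mul_self_fin_two, Matrix.sub_mul, Matrix.smul_mul, Matrix.smul_mul,
    Matrix.one_mul]
  exact hXY.smul_sub_smul hY _ _

end Cohn

/-- If `n/b ≤ m/Q ≤ n/b + 1/Q` and `b < Q`, the two fractions have the same floor. -/
theorem Nat.div_eq_div_of_le_of_le_add {m n b Q : ℕ} (hb : 0 < b) (hbQ : b < Q)
    (h₁ : n * Q ≤ m * b) (h₂ : m * b ≤ n * Q + b) : m / Q = n / b := by
  have hn := Nat.div_add_mod n b
  have hr := Nat.mod_lt n hb
  set k := n / b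
  set r := n % b
  apply Nat.div_eq_of_lt_le
  · exact Nat.le_of_mul_le_mul_right (by nlinarith) hb
  · exact Nat.lt_of_mul_lt_mul_right (a := b) (by nlinarith)

def christoffelWord {α : Type*} (a b : α) (p q : ℕ) : List α :=
  (List.range q).map fun i => if p * (i + 1) / q - p * i / q = 1 then b else a

/-- `p₁/q₁ < p₂/q₂ ≤ 1` are Farey neighbours, i.e. consecutive in the Stern–Brocot tree. -/
def FareyNeighbors (p₁ q₁ p₂ q₂ : ℕ) : Prop := p₂ ≤ q₂ ∧ p₂ * q₁ = p₁ * q₂ + 1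

namespace FareyNeighbors

variable {p₁ q₁ p₂ q₂ : ℕ}

theorem zero_one_one_one : FareyNeighbors 0 1 1 1 := ⟨le_rfl, rfl⟩

theorem pos_left (h : FareyNeighbors p₁ q₁ p₂ q₂) : 0 < q₁ :=
  Nat.pos_of_ne_zero fun h₁ => by simp [FareyNeighbors, h₁] at h

theorem pos_right (h : FareyNeighbors p₁ q₁ p₂ q₂) : 0 < q₂ :=
  Nat.pos_of_ne_zero fun h₂ => by simp [FareyNeighbors, h₂] at h; omega

theorem mediant_mul_div_left (h : FareyNeighbors p₁ q₁ p₂ q₂) {i : ℕ} (hi : i ≤ q₁) :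
    (p₁ + p₂) * i / (q₁ + q₂) = p₁ * i / q₁ := by
  have h₁ := h.pos_left
  have h₂ := h.pos_right
  apply Nat.div_eq_div_of_le_of_le_add h₁ (by omega) <;> nlinarith [h.2]

theorem mediant_mul_div_right (h : FareyNeighbors p₁ q₁ p₂ q₂) {j : ℕ} (hj : j ≤ q₂) :
    (p₁ + p₂) * (q₁ + j) / (q₁ + q₂) = p₁ + p₂ * j / q₂ := by
  have h₁ := h.pos_left
  have h₂ := h.pos_right
  have hsplit : (p₁ + p₂) * (q₁ + j) = ((p₁ + p₂) * j + 1) + (q₁ + q₂) * p₁ := by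
    linarith [h.2]
  rw [hsplit, Nat.add_mul_div_left _ _ (by omega), add_comm]
  congr 1
  apply Nat.div_eq_div_of_le_of_le_add h₂ (by omega) <;> nlinarith [h.2]

theorem christoffelWord_mediant {α : Type*} (a b : α) (h : FareyNeighbors p₁ q₁ p₂ q₂) :
    christoffelWord a b (p₁ + p₂) (q₁ + q₂) =
      christoffelWord a b p₁ q₁ ++ christoffelWord a b p₂ q₂ := by
  unfold christoffelWord
  rw [List.range_add, List.map_append, List.map_map]
  congr 1
  · refine List.map_congr_left fun i hi => ?_
    have hi := List.mem_range.mp hi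
    rw [h.mediant_mul_div_left (by omega), h.mediant_mul_div_left hi.le]
  · refine List.map_congr_left fun j hj => ?_
    have hj := List.mem_range.mp hj
    simp only [Function.comp_apply]
    rw [add_assoc q₁, h.mediant_mul_div_right hj, h.mediant_mul_div_right hj.le,
      Nat.add_sub_add_left]

theorem eq_zero_one_one_one_of_eq (h : FareyNeighbors p₁ q₁ p₂ q₂) (hq : q₁ = q₂) :
    p₁ = 0 ∧ q₁ = 1 ∧ p₂ = 1 ∧ q₂ = 1 := by
  subst hq
  obtain ⟨hp, h⟩ := h
  have hq : q₁ = 1 :=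
    Nat.dvd_one.mp <| (Nat.dvd_add_right (dvd_mul_left q₁ p₁)).mp (h ▸ dvd_mul_left q₁ p₂)
  subst hq
  omega

theorem exists_left_of_lt (h : FareyNeighbors p₁ q₁ p₂ q₂) (hq : q₁ < q₂) :
    ∃ p q, p₂ = p₁ + p ∧ q₂ = q₁ + q ∧ FareyNeighbors p₁ q₁ p q := by
  obtain ⟨hp, h⟩ := h
  obtain ⟨q, rfl⟩ := Nat.exists_eq_add_of_lt hq
  obtain ⟨p, rfl⟩ : ∃ p, p₂ = p₁ + p := Nat.exists_eq_add_of_le (by nlinarith)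
  refine ⟨p, q + 1, rfl, rfl, ?_, by linarith⟩
  nlinarith

theorem exists_right_of_lt (h : FareyNeighbors p₁ q₁ p₂ q₂) (hq : q₂ < q₁) :
    ∃ p q, p₁ = p + p₂ ∧ q₁ = q + q₂ ∧ FareyNeighbors p q p₂ q₂ := by
  have hq₂ := h.pos_right
  obtain ⟨hp, h⟩ := h
  obtain ⟨q, rfl⟩ : ∃ q, q₁ = q + q₂ := ⟨q₁ - q₂, by omega⟩
  obtain ⟨p, rfl⟩ : ∃ p, p₁ = p + p₂ := ⟨p₁ - p₂, by
    have : p₂ ≤ p₁ := by nlinarith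
    omega⟩
  exact ⟨p, q, rfl, rfl, hp, by linarith⟩

@[elab_as_elim]
theorem mediant_induction {motive : ℕ → ℕ → ℕ → ℕ → Prop} (base : motive 0 1 1 1)
    (left : ∀ {p₁ q₁ p₂ q₂}, FareyNeighbors p₁ q₁ p₂ q₂ → motive p₁ q₁ p₂ q₂ →
      motive p₁ q₁ (p₁ + p₂) (q₁ + q₂))
    (right : ∀ {p₁ q₁ p₂ q₂}, FareyNeighbors p₁ q₁ p₂ q₂ → motive p₁ q₁ p₂ q₂ →
      motive (p₁ + p₂) (q₁ + q₂) p₂ q₂)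
    {p₁ q₁ p₂ q₂ : ℕ} (h : FareyNeighbors p₁ q₁ p₂ q₂) : motive p₁ q₁ p₂ q₂ := by
  have := h.pos_left
  have := h.pos_right
  rcases lt_trichotomy q₁ q₂ with hq | hq | hq
  · obtain ⟨p, q, rfl, rfl, h'⟩ := h.exists_left_of_lt hq
    exact left h' (FareyNeighbors.mediant_induction base left right h')
  · obtain ⟨rfl, rfl, rfl, rfl⟩ := h.eq_zero_one_one_one_of_eq hq
    exact base
  · obtain ⟨p, q, rfl, rfl, h'⟩ := h.exists_right_of_lt hq
    exact right h' (FareyNeighbors.mediant_induction base left right h')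
termination_by q₁ + q₂
decreasing_by all_goals omega

end FareyNeighbors

theorem exists_fareyNeighbors_of_coprime {p q : ℕ} (hq : 0 < q) (hpq : p ≤ q)
    (hcop : Nat.Coprime p q) : ∃ p' q', FareyNeighbors p q p' q' ∨ FareyNeighbors p' q' p q := by
  rcases (Nat.one_le_iff_ne_zero.mpr hq.ne').eq_or_lt with rfl | hq
  · interval_cases p
    · exact ⟨1, 1, .inl FareyNeighbors.zero_one_one_one⟩
    · exact ⟨0, 1, .inr FareyNeighbors.zero_one_one_one⟩
  · obtain ⟨m, -, hm⟩ := Nat.exists_mul_mod_eq_one_of_coprime hcop hq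
    refine ⟨p * m / q, m, .inr ⟨hpq, ?_⟩⟩
    have := Nat.div_add_mod (p * m) q
    rw [hm] at this
    linarith

def christoffelMatrix (p q : ℕ) : Matrix (Fin 2) (Fin 2) ℤ :=
  (christoffelWord !![1, 1; 1, 2] !![3, 2; 4, 3] p q).prod

theorem christoffelMatrix_mediant {p₁ q₁ p₂ q₂ : ℕ} (h : FareyNeighbors p₁ q₁ p₂ q₂) :
    christoffelMatrix (p₁ + p₂) (q₁ + q₂) = christoffelMatrix p₁ q₁ * christoffelMatrix p₂ q₂ := by
  rw [christoffelMatrix, h.christoffelWord_mediant, List.prod_append]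
  rfl

theorem isCohn_christoffelMatrix_of_fareyNeighbors {p₁ q₁ p₂ q₂ : ℕ}
    (h : FareyNeighbors p₁ q₁ p₂ q₂) :
    IsCohn (christoffelMatrix p₁ q₁) ∧ IsCohn (christoffelMatrix p₂ q₂) ∧
      IsCohn (christoffelMatrix p₁ q₁ * christoffelMatrix p₂ q₂) := by
  refine FareyNeighbors.mediant_induction ?_ (fun h ih => ?_) (fun h ih => ?_) h
  · simp [IsCohn, christoffelMatrix, christoffelWord, trace_fin_two]
  · rw [christoffelMatrix_mediant h]
    exact ⟨ih.1, ih.2.2, ih.2.1.mul_self_mul ih.2.2⟩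
  · rw [christoffelMatrix_mediant h]
    exact ⟨ih.2.2, ih.2.1, ih.1.mul_mul_self ih.2.2⟩

theorem isCohn_christoffelMatrix {p q : ℕ} (hq : 0 < q) (hpq : p ≤ q) (hcop : Nat.Coprime p q) :
    IsCohn (christoffelMatrix p q) := by
  obtain ⟨p', q', h | h⟩ := exists_fareyNeighbors_of_coprime hq hpq hcop
  · exact (isCohn_christoffelMatrix_of_fareyNeighbors h).1
  · exact (isCohn_christoffelMatrix_of_fareyNeighbors h).2.1

/-- The product over the lower Christoffel word of slope `p/q` in the letters
`A = !![1,1;1,2]` and `B = !![3,2;4,3]` has trace equal to three times its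
upper-right entry (it is a Cohn matrix). -/
theorem christoffel_product_trace (p q : ℕ) (hq : 1 ≤ q) (hpq : p ≤ q)
    (hgcd : Nat.gcd p q = 1)
    (A B : Matrix (Fin 2) (Fin 2) ℤ)
    (hA : A = !![1, 1; 1, 2]) (hB : B = !![3, 2; 4, 3])
    (C : Matrix (Fin 2) (Fin 2) ℤ)
    (hC : C = ((List.range q).map
        (fun i => if p * (i + 1) / q - p * i / q = 1 then B else A)).prod) :
    Matrix.trace C = 3 * C 0 1 := by
  subst hA hB hC
  exact isCohn_christoffelMatrix hq hpq hgcd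
end

section
/- Let p, q be natural numbers with 1 ≤ q, p ≤ q and gcd(p, q) = 1. Let A = !![1,1;1,2] and B = !![3,2;4,3] be 2×2 integer matrices, and for i = 1, …, q let Xᵢ = B if ⌊p·i/q⌋ − ⌊p·(i−1)/q⌋ = 1 and Xᵢ = A otherwise (the lower Christoffel word of slope p/q). Then the upper-right entry m = C₀₁ of the product C = X₁·X₂·⋯·X_q is a Markov number: there exist positive integers y, z with m² + y² + z² = 3myz. -/
/-!
Factor the lower Christoffel word of slope `p/q` as the product of the Christoffel words of the
two Farey parents `p₁/q₁ < p₂/q₂` of `p/q` (those with `p₂ q₁ - p₁ q₂ = 1`, `p₁ + p₂ = p`,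
`q₁ + q₂ = q`). Descending the Stern–Brocot tree from `(0/1, 1/1)`, whose words give `(A, B)`,
the corresponding pairs of matrices `(X, Y)` stay Cohn pairs: `SL₂(ℤ)` matrices whose traces are
three times their upper-right entries and whose upper-right entries `X₀₁, Y₀₁, (XY)₀₁` form a
Markov triple. Each step `(X, Y) ↦ (X, XY)` or `(XY, Y)` is, by Cayley–Hamilton, a Vieta jump
`(a, b, c) ↦ (a, c, 3ac - b)` on that triple.
-/

open Matrix

theorem Matrix.cayley_hamilton_fin_two {R : Type*} [CommRing R] (M : Matrix (Fin 2) (Fin 2) R) :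
    M * M = M.trace • M - M.det • 1 := by
  ext i j
  fin_cases i <;> fin_cases j <;>
    simp [mul_apply, Fin.sum_univ_two, trace_fin_two, det_fin_two] <;> ring

def IsMarkovNumber (m : ℤ) : Prop :=
  0 < m ∧ ∃ y z : ℤ, 0 < y ∧ 0 < z ∧ m ^ 2 + y ^ 2 + z ^ 2 = 3 * m * y * z

theorem isMarkovNumber_one : IsMarkovNumber 1 := ⟨one_pos, 1, 1, one_pos, one_pos, by norm_num⟩

theorem isMarkovNumber_two : IsMarkovNumber 2 := ⟨two_pos, 1, 1, one_pos, one_pos, by norm_num⟩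

structure IsCohnPair (X Y : Matrix (Fin 2) (Fin 2) ℤ) : Prop where
  det_left : X.det = 1
  det_right : Y.det = 1
  trace_left : X.trace = 3 * X 0 1
  trace_right : Y.trace = 3 * Y 0 1
  trace_mul : (X * Y).trace = 3 * (X * Y) 0 1
  pos_left : 0 < X 0 1
  pos_right : 0 < Y 0 1
  markov : (X * Y) 0 1 ^ 2 + X 0 1 ^ 2 + Y 0 1 ^ 2 = 3 * (X * Y) 0 1 * X 0 1 * Y 0 1

namespace IsCohnPair

variable {X Y : Matrix (Fin 2) (Fin 2) ℤ}

theorem pos_mul (h : IsCohnPair X Y) : 0 < (X * Y) 0 1 := by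
  by_contra! hle
  nlinarith [h.markov, pow_pos h.pos_left 2, sq_nonneg ((X * Y) 0 1), sq_nonneg (Y 0 1),
    mul_nonpos_of_nonpos_of_nonneg hle (mul_pos h.pos_left h.pos_right).le]

theorem isMarkovNumber_mul (h : IsCohnPair X Y) : IsMarkovNumber ((X * Y) 0 1) :=
  ⟨h.pos_mul, X 0 1, Y 0 1, h.pos_left, h.pos_right, h.markov⟩

theorem fst_mul (h : IsCohnPair X Y) : IsCohnPair X (X * Y) := by
  have hXXY : X * (X * Y) = X.trace • (X * Y) - Y := by
    rw [← mul_assoc, cayley_hamilton_fin_two, h.det_left, one_smul, sub_mul, smul_mul_assoc,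
      one_mul]
  have entry : (X * (X * Y)) 0 1 = 3 * X 0 1 * (X * Y) 0 1 - Y 0 1 := by
    rw [hXXY, Matrix.sub_apply, Matrix.smul_apply, h.trace_left, smul_eq_mul, mul_assoc]
  refine ⟨h.det_left, by rw [det_mul, h.det_left, h.det_right, one_mul], h.trace_left,
    h.trace_mul, ?_, h.pos_left, h.pos_mul, ?_⟩
  · rw [entry, hXXY, trace_sub, trace_smul, h.trace_left, h.trace_mul, h.trace_right, smul_eq_mul]
    ring
  · rw [entry]
    linear_combination h.markov

theorem mul_snd (h : IsCohnPair X Y) : IsCohnPair (X * Y) Y := by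
  have hXYY : X * Y * Y = Y.trace • (X * Y) - X := by
    rw [mul_assoc, cayley_hamilton_fin_two, h.det_right, one_smul, mul_sub, mul_smul_comm,
      mul_one]
  have entry : (X * Y * Y) 0 1 = 3 * Y 0 1 * (X * Y) 0 1 - X 0 1 := by
    rw [hXYY, Matrix.sub_apply, Matrix.smul_apply, h.trace_right, smul_eq_mul, mul_assoc]
  refine ⟨by rw [det_mul, h.det_left, h.det_right, one_mul], h.det_right, h.trace_mul,
    h.trace_right, ?_, h.pos_mul, h.pos_right, ?_⟩
  · rw [entry, hXYY, trace_sub, trace_smul, h.trace_left, h.trace_mul, h.trace_right, smul_eq_mul]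
    ring
  · rw [entry]
    linear_combination h.markov

end IsCohnPair

theorem isCohnPair_base : IsCohnPair !![1, 1; 1, 2] !![3, 2; 4, 3] := by
  refine ⟨?_, ?_, ?_, ?_, ?_, ?_, ?_, ?_⟩ <;> simp [det_fin_two_of, trace_fin_two_of]

namespace Nat

variable {p₁ q₁ p₂ q₂ : ℕ}

theorem pos_of_mul_eq_mul_add_one (hF : p₂ * q₁ = p₁ * q₂ + 1) : 0 < q₁ := by
  rcases Nat.eq_zero_or_pos q₁ with rfl | h
  · simp at hF
  · exact h

/- As rationals, `(p₁ + p₂) i / (q₁ + q₂)` exceeds `p₁ i / q₁` by `i / (q₁ (q₁ + q₂)) < 1 / q₁`,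
too little to reach the next integer. -/
theorem mediant_mul_div_left (hF : p₂ * q₁ = p₁ * q₂ + 1) (hq₂ : 0 < q₂) {i : ℕ}
    (hi : i ≤ q₁) : (p₁ + p₂) * i / (q₁ + q₂) = p₁ * i / q₁ := by
  have hq₁ := pos_of_mul_eq_mul_add_one hF
  have hkey : q₁ * ((p₁ + p₂) * i) = (q₁ * (p₁ * i / q₁) + p₁ * i % q₁) * (q₁ + q₂) + i := by
    rw [Nat.div_add_mod]
    linear_combination i * hF
  have hr := Nat.mod_lt (p₁ * i) hq₁
  generalize p₁ * i / q₁ = k, p₁ * i % q₁ = r at hkey hr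
  apply Nat.div_eq_of_lt_le
  · refine Nat.le_of_mul_le_mul_left ?_ hq₁
    rw [hkey]
    nlinarith
  · refine Nat.lt_of_mul_lt_mul_left (a := q₁) ?_
    rw [hkey]
    nlinarith

theorem mediant_mul_div_right (hF : p₂ * q₁ = p₁ * q₂ + 1) (hq₂ : 0 < q₂) {j : ℕ}
    (hj : j ≤ q₂) : (p₁ + p₂) * (q₁ + j) / (q₁ + q₂) = p₁ + p₂ * j / q₂ := by
  have hq₁ := pos_of_mul_eq_mul_add_one hF
  have hkey : q₂ * ((p₁ + p₂) * (q₁ + j)) + (q₁ + j)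
      = (q₂ * p₁ + (q₂ * (p₂ * j / q₂) + p₂ * j % q₂) + 1) * (q₁ + q₂) := by
    rw [Nat.div_add_mod]
    zify at hF ⊢
    linear_combination ((q₂ : ℤ) - j) * hF
  have hr := Nat.mod_lt (p₂ * j) hq₂
  generalize p₂ * j / q₂ = k, p₂ * j % q₂ = r at hkey hr
  apply Nat.div_eq_of_lt_le
  · refine Nat.le_of_mul_le_mul_left ?_ hq₂
    nlinarith
  · refine Nat.lt_of_mul_lt_mul_left (a := q₂) ?_
    nlinarith

theorem exists_farey_parents {p q : ℕ} (hq : 1 < q) (hpq : p ≤ q) (hcop : p.Coprime q) :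
    ∃ p₁ q₁ p₂ q₂, p₁ + p₂ = p ∧ q₁ + q₂ = q ∧ p₂ * q₁ = p₁ * q₂ + 1 ∧ 0 < q₂ ∧ p₂ ≤ q₂ := by
  obtain ⟨q₁, hq₁, hmod⟩ := Nat.exists_mul_mod_eq_one_of_coprime hcop hq
  have hdiv := Nat.div_add_mod (p * q₁) q
  rw [hmod] at hdiv
  obtain ⟨q₂, rfl⟩ := Nat.exists_eq_add_of_le hq₁.le
  generalize p * q₁ / (q₁ + q₂) = p₁ at hdiv
  obtain ⟨p₂, rfl⟩ := Nat.exists_eq_add_of_le (show p₁ ≤ p by nlinarith)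
  exact ⟨p₁, q₁, p₂, q₂, rfl, rfl, by linarith, by omega, by nlinarith⟩

end Nat

section Christoffel

variable {M : Type*} [Monoid M] (a b : M)

def christoffelProd (p q : ℕ) : M :=
  ((List.range q).map (fun i => if p * (i + 1) / q - p * i / q = 1 then b else a)).prod

theorem christoffelProd_one (p : ℕ) : christoffelProd a b p 1 = if p = 1 then b else a := by
  simp [christoffelProd]

theorem christoffelProd_mediant {p₁ q₁ p₂ q₂ : ℕ} (hF : p₂ * q₁ = p₁ * q₂ + 1) (hq₂ : 0 < q₂) :
    christoffelProd a b (p₁ + p₂) (q₁ + q₂) =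
      christoffelProd a b p₁ q₁ * christoffelProd a b p₂ q₂ := by
  unfold christoffelProd
  rw [List.range_add, List.map_append, List.prod_append, List.map_map]
  congr 2
  · refine List.map_congr_left fun i hi => ?_
    rw [List.mem_range] at hi
    rw [Nat.mediant_mul_div_left hF hq₂ hi, Nat.mediant_mul_div_left hF hq₂ hi.le]
  · refine List.map_congr_left fun j hj => ?_
    rw [List.mem_range] at hj
    simp only [Function.comp_apply]
    rw [add_assoc, Nat.mediant_mul_div_right hF hq₂ hj, Nat.mediant_mul_div_right hF hq₂ hj.le,
      Nat.add_sub_add_left]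

end Christoffel

/- Induction on `q₁ + q₂`: the parent with the larger denominator is the mediant of the other
one and of a Farey neighbour with smaller denominator. -/
theorem isCohnPair_christoffelProd {p₁ q₁ p₂ q₂ : ℕ} (hF : p₂ * q₁ = p₁ * q₂ + 1)
    (hq₂ : 0 < q₂) (hpq₂ : p₂ ≤ q₂) :
    IsCohnPair (christoffelProd !![1, 1; 1, 2] !![3, 2; 4, 3] p₁ q₁)
      (christoffelProd !![1, 1; 1, 2] !![3, 2; 4, 3] p₂ q₂) := by
  induction hn : q₁ + q₂ using Nat.strong_induction_on generalizing p₁ q₁ p₂ q₂ with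
  | _ n ih =>
  subst hn
  have hq₁ := Nat.pos_of_mul_eq_mul_add_one hF
  rcases lt_trichotomy q₁ q₂ with hlt | rfl | hgt
  · obtain ⟨e, rfl⟩ := Nat.exists_eq_add_of_le hlt.le
    obtain ⟨f, rfl⟩ := Nat.exists_eq_add_of_le (show p₁ ≤ p₂ by nlinarith)
    have hF' : f * q₁ = p₁ * e + 1 := by linarith
    rw [christoffelProd_mediant _ _ hF' (by omega)]
    exact (ih _ (by omega) hF' (by omega) (by nlinarith) rfl).fst_mul
  · obtain rfl : q₁ = 1 :=
      Nat.dvd_one.mp ((Nat.dvd_add_right (dvd_mul_left q₁ p₁)).mp (hF ▸ dvd_mul_left q₁ p₂))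
    obtain ⟨rfl, rfl⟩ : p₁ = 0 ∧ p₂ = 1 := by omega
    simpa [christoffelProd_one] using isCohnPair_base
  · obtain ⟨e, rfl⟩ := Nat.exists_eq_add_of_le hgt.le
    obtain ⟨f, rfl⟩ := Nat.exists_eq_add_of_le (show p₂ ≤ p₁ by nlinarith)
    have hF' : p₂ * e = f * q₂ + 1 := by linarith
    rw [add_comm q₂ e, add_comm p₂ f, christoffelProd_mediant _ _ hF' hq₂]
    exact (ih _ (by omega) hF' hq₂ hpq₂ rfl).mul_snd

/-- The upper-right entry of the product over the lower Christoffel word of slope `p/q`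
in the letters `A = !![1,1;1,2]` and `B = !![3,2;4,3]` is a Markov number: it is
positive and belongs to a positive integer solution of `x² + y² + z² = 3xyz`. -/
theorem christoffel_product_entry_is_markov (p q : ℕ) (hq : 1 ≤ q) (hpq : p ≤ q)
    (hgcd : Nat.gcd p q = 1)
    (A B : Matrix (Fin 2) (Fin 2) ℤ)
    (hA : A = !![1, 1; 1, 2]) (hB : B = !![3, 2; 4, 3])
    (C : Matrix (Fin 2) (Fin 2) ℤ)
    (hC : C = ((List.range q).map
        (fun i => if p * (i + 1) / q - p * i / q = 1 then B else A)).prod) :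
    0 < C 0 1 ∧ ∃ y z : ℤ, 0 < y ∧ 0 < z ∧
      (C 0 1) ^ 2 + y ^ 2 + z ^ 2 = 3 * C 0 1 * y * z := by
  subst hA hB
  change IsMarkovNumber (C 0 1)
  rw [hC, ← christoffelProd]
  obtain rfl | hq_gt := hq.eq_or_lt
  · rw [christoffelProd_one]
    split_ifs
    exacts [isMarkovNumber_two, isMarkovNumber_one]
  obtain ⟨p₁, q₁, p₂, q₂, rfl, rfl, hF, hq₂, hpq₂⟩ := Nat.exists_farey_parents hq_gt hpq hgcd
  rw [christoffelProd_mediant _ _ hF hq₂]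
  exact (isCohnPair_christoffelProd hF hq₂ hpq₂).isMarkovNumber_mul
end

section
/- Let w be an n×n matrix over a commutative ring that is super upper triangular, i.e. wᵢⱼ = 0 whenever i > j + 1 (0-indexed). Let C be the matrix obtained from w by negating the subdiagonal entries: Cᵢⱼ = −wᵢⱼ if i = j + 1 and Cᵢⱼ = wᵢⱼ otherwise. Then the permanent of w equals the determinant of C: perm(w) = det(C). -/
/-- The permanent of a square matrix over a commutative ring. -/
def Matrix.perm {n : ℕ} {R : Type*} [CommRing R] (A : Matrix (Fin n) (Fin n) R) : R :=
  ∑ σ : Equiv.Perm (Fin n), ∏ i, A i (σ i)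

/-!
Both sides expand over permutations σ, and only those with `σ i ≥ i - 1` for all `i` contribute,
the negated subdiagonal contributing `(-1) ^ #{i | σ i = i - 1}` to `det C`. For such σ this
power is `sign σ`: composing σ with the transposition of the least such `i` and `σ i` keeps the
property and removes exactly `i` from that set, and once the set is empty `σ i ≥ i` for all `i`,
which forces `σ = 1`.
-/

open Equiv Finset

theorem Finset.prod_ite_neg {ι M : Type*} [CommMonoid M] [HasDistribNeg M] (s : Finset ι)
    (p : ι → Prop) [DecidablePred p] (f : ι → M) :
    ∏ i ∈ s, (if p i then -f i else f i) = (-1) ^ #(s.filter p) * ∏ i ∈ s, f i := by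
  rw [prod_ite, prod_neg, mul_assoc, prod_filter_mul_prod_filter_not]

namespace Equiv.Perm

variable {n : ℕ}

theorem eq_one_of_forall_le_apply {σ : Perm (Fin n)} (h : ∀ i, i ≤ σ i) : σ = 1 := by
  have hsum : ∑ i : Fin n, (i : ℕ) = ∑ i, (σ i : ℕ) := (Equiv.sum_comp σ _).symm
  have hfix := (sum_eq_sum_iff_of_le fun i _ => Fin.le_def.mp (h i)).mp hsum
  ext i
  exact (hfix i (mem_univ i)).symm

def subdiagIndices (σ : Perm (Fin n)) : Finset (Fin n) :=
  univ.filter fun i => (i : ℕ) = σ i + 1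

theorem mem_subdiagIndices {σ : Perm (Fin n)} {i : Fin n} :
    i ∈ subdiagIndices σ ↔ (i : ℕ) = σ i + 1 := by
  simp [subdiagIndices]

theorem mul_swap_of_mem_subdiagIndices {σ : Perm (Fin n)}
    (hσ : ∀ k : Fin n, (k : ℕ) ≤ σ k + 1) {i : Fin n} (hi : i ∈ subdiagIndices σ)
    (hσi : σ i ∉ subdiagIndices σ) :
    (∀ k : Fin n, (k : ℕ) ≤ (σ * swap (σ i) i) k + 1) ∧
      subdiagIndices (σ * swap (σ i) i) = (subdiagIndices σ).erase i := by
  rw [mem_subdiagIndices] at hi hσi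
  have hne : σ i ≠ i := fun h => by rw [h] at hi; omega
  have hσσi : (σ (σ i) : ℕ) ≠ σ i := fun h => hne (σ.injective (Fin.ext h))
  have hval : ∀ k, (σ * swap (σ i) i) k =
      if k = i then σ (σ i) else if k = σ i then σ i else σ k := by
    intro k
    rcases eq_or_ne k i with rfl | h₁
    · simp
    rcases eq_or_ne k (σ i) with rfl | h₂
    · simp [h₁]
    · simp [swap_apply_of_ne_of_ne h₂ h₁, h₁, h₂]
  have hσσi_ge := hσ (σ i)
  refine ⟨fun k => ?_, ?_⟩
  · rw [hval]
    split_ifs with h₁ h₂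
    · subst h₁; omega
    · subst h₂; omega
    · exact hσ k
  · ext k
    rw [mem_subdiagIndices, mem_erase, mem_subdiagIndices, hval]
    split_ifs with h₁ h₂
    · subst h₁; simp only [ne_eq, not_true_eq_false, false_and, iff_false]; omega
    · subst h₂; simp only [ne_eq, hne, not_false_eq_true, true_and]; omega
    · simp [h₁]

theorem sign_eq_neg_one_pow_card_subdiagIndices {σ : Perm (Fin n)}
    (hσ : ∀ i : Fin n, (i : ℕ) ≤ σ i + 1) : sign σ = (-1) ^ #(subdiagIndices σ) := by
  obtain ⟨d, hd⟩ : ∃ d, #(subdiagIndices σ) = d := ⟨_, rfl⟩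
  induction d generalizing σ with
  | zero =>
    have hle : ∀ i, i ≤ σ i := fun i => by
      have := hσ i
      have : (i : ℕ) ≠ σ i + 1 := fun h => by
        simpa [card_eq_zero.mp hd] using mem_subdiagIndices.mpr h
      rw [Fin.le_def]; omega
    rw [hd, pow_zero, eq_one_of_forall_le_apply hle, sign_one]
  | succ d ih =>
    have hne : (subdiagIndices σ).Nonempty := card_pos.mp (by omega)
    set i := (subdiagIndices σ).min' hne
    have hi : i ∈ subdiagIndices σ := min'_mem _ hne
    have hσi : σ i ∉ subdiagIndices σ := fun h => by
      have := min'_le _ _ h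
      rw [mem_subdiagIndices] at hi
      rw [Fin.le_def] at this; omega
    have hswap : σ i ≠ i := fun h => hσi (by rwa [h])
    obtain ⟨hτ, hDτ⟩ := mul_swap_of_mem_subdiagIndices hσ hi hσi
    have hsign := ih hτ (by rw [hDτ, card_erase_of_mem hi, hd]; rfl)
    rw [sign_mul, sign_swap hswap, hDτ, card_erase_of_mem hi, hd, Nat.add_sub_cancel] at hsign
    rw [hd, pow_succ, ← hsign, mul_assoc, Int.units_mul_self, mul_one]

end Equiv.Perm

/-- For a super upper triangular matrix `w` (i.e. `wᵢⱼ = 0` for `i > j + 1`), the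
permanent of `w` equals the determinant of the matrix obtained from `w` by negating
the subdiagonal entries. -/
theorem perm_eq_det_of_superUpperTriangular {n : ℕ} {R : Type*} [CommRing R]
    (w : Matrix (Fin n) (Fin n) R)
    (hsup : ∀ i j : Fin n, (j : ℕ) + 1 < (i : ℕ) → w i j = 0)
    (C : Matrix (Fin n) (Fin n) R)
    (hC : C = Matrix.of fun i j : Fin n =>
      if (i : ℕ) = (j : ℕ) + 1 then -w i j else w i j) :
    Matrix.perm w = Matrix.det C := by
  subst hC
  rw [← Matrix.det_transpose, Matrix.det_apply']
  refine sum_congr rfl fun σ _ => ?_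
  simp only [Matrix.transpose_apply, Matrix.of_apply, prod_ite_neg]
  by_cases hσ : ∀ i : Fin n, (i : ℕ) ≤ σ i + 1
  · rw [Perm.sign_eq_neg_one_pow_card_subdiagIndices hσ, Perm.subdiagIndices]
    push_cast
    rw [← mul_assoc, ← pow_add, ← two_mul, pow_mul, neg_one_sq, one_pow, one_mul]
  · obtain ⟨i, hi⟩ := not_forall.mp hσ
    rw [prod_eq_zero (mem_univ i) (hsup i (σ i) (by omega)), mul_zero, mul_zero]
end

section
/- Let w be an n×n matrix over a commutative ring that is super upper triangular with unit subdiagonal, i.e. wᵢⱼ = 0 whenever i > j + 1 and w_{j+1,j} = 1 for all 0 ≤ j ≤ n−2 (0-indexed). For 0 ≤ k ≤ n let P_k denote the permanent of the top-left k×k submatrix of w, with P₀ = 1. Then for every 1 ≤ k ≤ n, the permanents satisfy the recursion P_k = Σ_{i=0}^{k−1} w_{i,k−1} · P_i. -/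
namespace Matrix

open Equiv Finset

variable {R : Type*} [CommSemiring R]

theorem permanent_succ_column_zero {n : ℕ} (A : Matrix (Fin (n + 1)) (Fin (n + 1)) R) :
    A.permanent = ∑ i, A i 0 * (A.submatrix i.succAbove Fin.succ).permanent := by
  rw [permanent, univ_perm_fin_succ, ← univ_product_univ, sum_map, sum_product]
  refine sum_congr rfl fun i _ => ?_
  cases i using Fin.cases with
  | zero =>
    simp only [Fin.prod_univ_succ, permanent, mul_sum, toEmbedding_apply,
      Perm.decomposeFin_symm_apply_zero, Perm.decomposeFin_symm_apply_succ, Fin.succAbove_zero,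
      submatrix_apply, swap_self, refl_apply]
  | succ i =>
    -- `decomposeFin` lists the rows of the minor in the order given by `i.cycleRange`
    rw [← permanent_permute_cols i.cycleRange, permanent, mul_sum]
    refine sum_congr rfl fun σ _ => ?_
    simp only [Fin.prod_univ_succ, toEmbedding_apply, Perm.decomposeFin_symm_apply_zero,
      Perm.decomposeFin_symm_apply_succ, submatrix_apply, Fin.succAbove_cycleRange, id]

theorem permanent_succ_row_zero {n : ℕ} (A : Matrix (Fin (n + 1)) (Fin (n + 1)) R) :
    A.permanent = ∑ j, A 0 j * (A.submatrix Fin.succ j.succAbove).permanent := by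
  rw [← permanent_transpose, permanent_succ_column_zero]
  simp only [transpose_apply, ← transpose_submatrix, permanent_transpose]

theorem permanent_succ_row {n : ℕ} (A : Matrix (Fin (n + 1)) (Fin (n + 1)) R)
    (i : Fin (n + 1)) :
    A.permanent = ∑ j, A i j * (A.submatrix i.succAbove j.succAbove).permanent := by
  rw [← permanent_permute_cols i.cycleRange.symm, permanent_succ_row_zero]
  simp only [submatrix_apply, Fin.cycleRange_symm_zero, id, submatrix_submatrix,
    Function.comp_def, Fin.cycleRange_symm_succ]

end Matrix

theorem Matrix.perm_eq_permanent {n : ℕ} {R : Type*} [CommRing R]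
    (A : Matrix (Fin n) (Fin n) R) : A.perm = A.permanent :=
  A.permanent_transpose

open Matrix Finset in
theorem permanent_updateCol_last_of_hessenberg {R : Type*} [CommRing R] {n : ℕ}
    {w : ℕ → ℕ → R} (hsup : ∀ i j, i < n → j < n → j + 1 < i → w i j = 0)
    (hsub : ∀ j, j + 1 < n → w (j + 1) j = 1) (v : ℕ → R) {m : ℕ} (hm : m + 1 ≤ n) :
    ((of fun i j : Fin (m + 1) => w i j).updateCol (Fin.last m) fun i => v i).permanent =
      ∑ i ∈ range (m + 1), v i * (of fun a b : Fin i => w a b).permanent := by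
  induction m with
  | zero => simp [permanent_isEmpty]
  | succ t ih =>
    set M := (of fun i j : Fin (t + 2) => w i j).updateCol (Fin.last (t + 1)) fun i => v i
    have below_sub (p : Fin t) : M (Fin.last (t + 1)) p.castSucc.castSucc = 0 := by
      simp only [M, updateCol_ne (Fin.castSucc_lt_last _).ne, of_apply]
      exact hsup (t + 1) p hm (by omega) (by omega)
    have on_sub : M (Fin.last (t + 1)) (Fin.last t).castSucc = 1 := by
      simp only [M, updateCol_ne (Fin.castSucc_lt_last _).ne, of_apply]
      exact hsub t hm
    have on_diag : M (Fin.last (t + 1)) (Fin.last (t + 1)) = v (t + 1) := updateCol_self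
    have minor_sub : M.submatrix Fin.castSucc (Fin.last t).castSucc.succAbove =
        (of fun i j : Fin (t + 1) => w i j).updateCol (Fin.last t) fun i => v i := by
      ext i j
      cases j using Fin.lastCases with
      | last => simp [M, Fin.succAbove_of_le_castSucc]
      | cast j => simp [M, Fin.succAbove_of_castSucc_lt]
    have minor_diag : M.submatrix Fin.castSucc Fin.castSucc =
        of fun i j : Fin (t + 1) => w i j := by
      ext i j
      simp [M]
    rw [permanent_succ_row M (Fin.last (t + 1)), Fin.sum_univ_castSucc, Fin.sum_univ_castSucc,
      sum_eq_zero fun p _ => by rw [below_sub, zero_mul], zero_add, on_sub, one_mul,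
      Fin.succAbove_last, minor_sub, ih (by omega), on_diag, minor_diag,
      sum_range_succ (n := t + 1)]

/-- **Recursion for permanents of wug-snake weight matrices.** Let `w` be an `n×n`
matrix (given by its entry function) that is super upper triangular with unit
subdiagonal, and let `P k` be the permanent of its top-left `k×k` submatrix
(`P 0 = 1`). Then `P k = Σ_{i<k} w i (k−1) · P i` for every `1 ≤ k ≤ n`. -/
theorem perm_filtration_recursion {R : Type*} [CommRing R] (n : ℕ)
    (w : ℕ → ℕ → R)
    (hsup : ∀ i j, i < n → j < n → j + 1 < i → w i j = 0)
    (hsub : ∀ j, j + 1 < n → w (j + 1) j = 1)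
    (P : ℕ → R)
    (hP : ∀ k, P k = Matrix.perm (Matrix.of fun i j : Fin k => w i j)) :
    ∀ k, 1 ≤ k → k ≤ n → P k = ∑ i ∈ Finset.range k, w i (k - 1) * P i := by
  intro k hk hkn
  obtain ⟨m, rfl⟩ : ∃ m, k = m + 1 := ⟨k - 1, by omega⟩
  have last_col : ((Matrix.of fun i j : Fin (m + 1) => w i j).updateCol (Fin.last m)
      fun i => w i m) = Matrix.of fun i j : Fin (m + 1) => w i j :=
    Matrix.updateCol_eq_self _ _
  simp only [hP, Matrix.perm_eq_permanent, Nat.add_sub_cancel]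
  rw [← last_col]
  exact permanent_updateCol_last_of_hessenberg hsup hsub (fun i => w i m) hkn
end

section
/- Let R be a commutative ring, let A be an n×n matrix over R, let P be an invertible n×n matrix over R, and let v be a vector in Rⁿ. Then the Markov–Davenport form satisfies the covariance f_{PAP⁻¹}(P·v) = det(P) · f_A(v), where P·v denotes Matrix.mulVec. -/
/-- The Markov–Davenport form of an `n×n` matrix `A`, evaluated at a vector `v`:
`f_A(v) = det[v, Av, A²v, …, A^{n−1}v]`. -/
def MDform {R : Type*} [CommRing R] {n : ℕ} (A : Matrix (Fin n) (Fin n) R)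
    (v : Fin n → R) : R :=
  Matrix.det (Matrix.of fun i j : Fin n => (A ^ (j : ℕ)).mulVec v i)

/-!
If `P * A = B * P`, then `P * A ^ j = B ^ j * P` for every `j`, so `P` maps the Krylov vectors
`A ^ j v` of `(A, v)` to those of `(B, P v)`. The matrix of the latter is therefore `P` times the
matrix of the former, and multiplicativity of the determinant gives `f_B(P v) = det P · f_A(v)`.
Conjugation `B = P A P⁻¹` by an invertible `P` is the special case.
-/

namespace Matrix

variable {R : Type*} [CommRing R] {n : Type*} [Fintype n]

theorem mul_of_columns {m : Type*} (P : Matrix n n R) (w : m → n → R) :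
    (P * of fun i j => w j i) = of fun i j => (P *ᵥ w j) i := by
  ext i j
  simp only [mul_apply, of_apply, mulVec, dotProduct]

theorem semiconjBy_mul_mul_nonsing_inv [DecidableEq n] (A P : Matrix n n R) (hP : IsUnit P.det) :
    SemiconjBy P A (P * A * P⁻¹) := by
  rw [SemiconjBy, Matrix.mul_assoc _ P⁻¹, nonsing_inv_mul P hP, Matrix.mul_one]

end Matrix

open Matrix in
theorem MDform_of_semiconjBy {R : Type*} [CommRing R] {n : ℕ} {A B P : Matrix (Fin n) (Fin n) R}
    (h : SemiconjBy P A B) (v : Fin n → R) :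
    MDform B (P *ᵥ v) = P.det * MDform A v := by
  have krylov : (of fun i j : Fin n => (B ^ (j : ℕ) *ᵥ P *ᵥ v) i) =
      P * of fun i j : Fin n => (A ^ (j : ℕ) *ᵥ v) i := by
    simp only [mul_of_columns, mulVec_mulVec, (h.pow_right _).eq]
  rw [MDform, MDform, krylov, det_mul]

/-- **Covariance of the Markov–Davenport form:**
`f_{PAP⁻¹}(P·v) = det(P) · f_A(v)` for invertible `P`. -/
theorem MDform_conjugation_covariance {R : Type*} [CommRing R] {n : ℕ}
    (A P : Matrix (Fin n) (Fin n) R) (hP : IsUnit P.det) (v : Fin n → R) :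
    MDform (P * A * P⁻¹) (P.mulVec v) = P.det * MDform A v :=
  MDform_of_semiconjBy (Matrix.semiconjBy_mul_mul_nonsing_inv A P hP) v
end

section
/- Let A be an n×n real matrix and let P be an n×n integer matrix with det(P) = 1 or det(P) = −1 (so that its real image P_ℝ is invertible). Then the set of absolute values of the Markov–Davenport form of P_ℝ·A·P_ℝ⁻¹ at nonzero integer vectors equals the set of absolute values of the Markov–Davenport form of A at nonzero integer vectors: { |f_{P_ℝAP_ℝ⁻¹}(u)| : u ∈ ℤⁿ, u ≠ 0 } = { |f_A(v)| : v ∈ ℤⁿ, v ≠ 0 }. In particular, the geometric Markov number inf over nonzero integer vectors of |f| is independent of the choice of integer basis. -/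
open Matrix

namespace Matrix

variable {m R : Type*} [Fintype m] [CommRing R]

theorem of_mulVec_apply (P : Matrix m m R) (c : m → m → R) :
    of (fun i j => (P *ᵥ c j) i) = P * of (fun i j => c j i) := by
  ext i j
  simp only [of_apply, mulVec, dotProduct, mul_apply]

theorem map_intCast_mulVec (P : Matrix m m ℤ) (v : m → ℤ) :
    (fun i => ((P *ᵥ v) i : R)) = P.map (Int.cast : ℤ → R) *ᵥ fun i => (v i : R) :=
  funext fun i => (Int.castRingHom R).map_mulVec P v i

end Matrix

theorem MDform_conj_mulVec {R : Type*} [CommRing R] {n : ℕ} (A P : Matrix (Fin n) (Fin n) R)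
    (hP : IsUnit P.det) (w : Fin n → R) :
    MDform (P * A * P⁻¹) (P *ᵥ w) = P.det * MDform A w := by
  obtain ⟨U, rfl⟩ := (isUnit_iff_isUnit_det P).mpr hP
  have hcol (j : ℕ) : ((U : Matrix (Fin n) (Fin n) R) * A * (U : Matrix (Fin n) (Fin n) R)⁻¹) ^ j
      *ᵥ (U *ᵥ w) = U *ᵥ (A ^ j *ᵥ w) := by
    rw [← coe_units_inv, Units.conj_pow, mulVec_mulVec, Units.inv_mul_cancel_right, mulVec_mulVec]
  simp only [MDform, hcol, of_mulVec_apply, det_mul]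

theorem abs_MDform_conj_intCast_mulVec {R : Type*} [CommRing R] [LinearOrder R]
    [IsStrictOrderedRing R] {n : ℕ} (A : Matrix (Fin n) (Fin n) R)
    (P : Matrix (Fin n) (Fin n) ℤ) (hP : IsUnit P.det) (v : Fin n → ℤ) :
    |MDform (P.map (Int.cast : ℤ → R) * A * (P.map (Int.cast : ℤ → R))⁻¹)
        (fun i => ((P *ᵥ v) i : R))| = |MDform A (fun i => (v i : R))| := by
  have hdet : (P.map (Int.cast : ℤ → R)).det = P.det := ((Int.castRingHom R).map_det P).symm
  have habs : |(P.det : R)| = 1 := by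
    rw [← Int.cast_abs, Int.isUnit_iff_abs_eq.mp hP, Int.cast_one]
  rw [map_intCast_mulVec, MDform_conj_mulVec _ _ (hdet ▸ hP.map (Int.castRingHom R)), abs_mul,
    hdet, habs, one_mul]

/-- **Base independence of geometric Markov numbers.** For a real matrix `A` and an
integer matrix `P` with `det P = ±1`, the set of absolute values of the
Markov–Davenport form of `P_ℝ A P_ℝ⁻¹` at nonzero integer vectors equals the
corresponding set for `A`. -/
theorem MDform_values_invariant_under_integer_base_change {n : ℕ}
    (A : Matrix (Fin n) (Fin n) ℝ) (P : Matrix (Fin n) (Fin n) ℤ)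
    (hP : P.det = 1 ∨ P.det = -1) :
    {r : ℝ | ∃ u : Fin n → ℤ, u ≠ 0 ∧
        r = |MDform ((P.map (Int.cast : ℤ → ℝ)) * A * (P.map (Int.cast : ℤ → ℝ))⁻¹)
              (fun i => (u i : ℝ))|}
    = {r : ℝ | ∃ v : Fin n → ℤ, v ≠ 0 ∧
        r = |MDform A (fun i => (v i : ℝ))|} := by
  have hdet : IsUnit P.det := Int.isUnit_iff.mpr hP
  have hunit : IsUnit P := (isUnit_iff_isUnit_det P).mpr hdet
  ext r
  rw [Set.mem_ofPred_eq, Set.mem_ofPred_eq, (mulVec_surjective_iff_isUnit.mpr hunit).exists]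
  refine exists_congr fun v => ?_
  rw [(mulVec_injective_of_isUnit hunit).ne_iff' (mulVec_zero P),
    abs_MDform_conj_intCast_mulVec A P hdet v]
end

section
/- Let A be a 2×2 real matrix. Then the set of absolute values of the Markov–Davenport form of the transpose Aᵀ at nonzero integer vectors equals the corresponding set for A: { |f_{Aᵀ}(u)| : u ∈ ℤ², u ≠ 0 } = { |f_A(v)| : v ∈ ℤ², v ≠ 0 }. In particular, A and Aᵀ have the same geometric Markov number. -/
/-! For `A = !![a, b; c, d]` the form is the binary quadratic form `c x² + (d - a) x y - b y²`.
Hence `f_{Aᵀ}(y, -x) = -f_A(x, y)`, and the quarter turn `(x, y) ↦ (y, -x)` permutes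
`ℤ² \ {0}`. -/

open Matrix

def quarterTurn {R : Type*} [Neg R] (v : Fin 2 → R) : Fin 2 → R := ![v 1, -v 0]

theorem quarterTurn_eq_zero_iff {R : Type*} [SubtractionMonoid R] {v : Fin 2 → R} :
    quarterTurn v = 0 ↔ v = 0 := by
  simp [quarterTurn, funext_iff, Fin.forall_fin_two, and_comm]

theorem map_quarterTurn {R S : Type*} [AddGroup R] [AddGroup S] (f : R →+ S) (v : Fin 2 → R) :
    (fun i => f (quarterTurn v i)) = quarterTurn (fun i => f (v i)) := by
  ext i
  fin_cases i <;> simp [quarterTurn]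

theorem MDform_fin_two {R : Type*} [CommRing R] (A : Matrix (Fin 2) (Fin 2) R)
    (v : Fin 2 → R) :
    MDform A v = A 1 0 * v 0 ^ 2 + (A 1 1 - A 0 0) * (v 0 * v 1) - A 0 1 * v 1 ^ 2 := by
  simp [MDform, det_fin_two, mulVec, dotProduct, Fin.sum_univ_two]
  ring

theorem MDform_transpose_quarterTurn {R : Type*} [CommRing R] (A : Matrix (Fin 2) (Fin 2) R)
    (v : Fin 2 → R) : MDform Aᵀ (quarterTurn v) = -MDform A v := by
  simp only [MDform_fin_two, quarterTurn, transpose_apply, Matrix.cons_val_zero,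
    Matrix.cons_val_one]
  ring

theorem MDform_transpose_abs_values_subset (A : Matrix (Fin 2) (Fin 2) ℝ) :
    {r : ℝ | ∃ v : Fin 2 → ℤ, v ≠ 0 ∧ r = |MDform A (fun i => (v i : ℝ))|}
      ⊆ {r : ℝ | ∃ u : Fin 2 → ℤ, u ≠ 0 ∧ r = |MDform Aᵀ (fun i => (u i : ℝ))|} := by
  rintro _ ⟨v, hv, rfl⟩
  refine ⟨quarterTurn v, mt quarterTurn_eq_zero_iff.mp hv, ?_⟩
  have hcast : (fun i => ((quarterTurn v i : ℤ) : ℝ)) = quarterTurn (fun i => (v i : ℝ)) :=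
    map_quarterTurn (Int.castAddHom ℝ) v
  rw [hcast, MDform_transpose_quarterTurn, abs_neg]

/-- A `2×2` real matrix and its transpose take the same set of absolute values of their
Markov–Davenport forms on nonzero integer vectors; in particular they have the same
geometric Markov number. -/
theorem MDform_values_transpose (A : Matrix (Fin 2) (Fin 2) ℝ) :
    {r : ℝ | ∃ u : Fin 2 → ℤ, u ≠ 0 ∧
        r = |MDform A.transpose (fun i => (u i : ℝ))|}
    = {r : ℝ | ∃ v : Fin 2 → ℤ, v ≠ 0 ∧
        r = |MDform A (fun i => (v i : ℝ))|} :=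
  subset_antisymm (by simpa using MDform_transpose_abs_values_subset Aᵀ)
    (MDform_transpose_abs_values_subset A)
end
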